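/- arXiv:2009.13651 — 2 statements merged into one kernel-verified Lean document; each statement's English description precedes it below -/
import Mathlib

section
/- Let G be a group and let K be a nontrivial finite normal subgroup of G. Then the finitely supported function f = χ_K − |K|·δ_1 (where δ_1 is the point mass at the identity) is nonzero and satisfies ∑_{k ∈ K} f(g·k·h) = 0 for all g, h ∈ G; in particular, K is not an F(G)-Pompeiu set, and more generally K is not a C-Pompeiu set for any class of functions C containing the finitely supported functions. -/
open scoped Classical

/-! Normality makes membership of `g * k * h` in `N` independent of `k ∈ N`, so summing `χ_N` over
`gNh` gives `|N| χ_N(gh)`, while `δ_1` is hit exactly once on `gNh` when `gh ∈ N` (at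
`k = g⁻¹h⁻¹`) and never otherwise. Hence `χ_N − |N| δ_1` has vanishing two-sided sums, and it is
nonzero because its value at `1` is `1 − |N| ≠ 0`. -/

open Finset

namespace Subgroup

variable {G : Type*} [Group G] {N : Subgroup G}

theorem Normal.mul_mul_mem_iff (hN : N.Normal) {k : G} (hk : k ∈ N) (g h : G) :
    g * k * h ∈ N ↔ g * h ∈ N := by
  rw [mul_assoc, hN.mem_comm_iff, mul_assoc, N.mul_mem_cancel_left hk, hN.mem_comm_iff]

theorem Normal.inv_mul_inv_mem_iff (hN : N.Normal) (g h : G) : g⁻¹ * h⁻¹ ∈ N ↔ g * h ∈ N := by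
  rw [← mul_inv_rev, N.inv_mem_iff, hN.mem_comm_iff]

variable {R : Type*} [AddCommMonoidWithOne R]

theorem Normal.sum_indicator_mul_mul (hN : N.Normal) (hfin : (N : Set G).Finite) (g h : G) :
    ∑ k ∈ hfin.toFinset, (if g * k * h ∈ N then (1 : R) else 0) =
      if g * h ∈ N then (#hfin.toFinset : R) else 0 := by
  rw [sum_congr rfl fun k hk ↦ by rw [hN.mul_mul_mem_iff (hfin.mem_toFinset.mp hk)]]
  split_ifs <;> simp

theorem Normal.sum_delta_mul_mul (hN : N.Normal) (hfin : (N : Set G).Finite) (g h : G) :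
    ∑ k ∈ hfin.toFinset, (if g * k * h = 1 then (1 : R) else 0) = if g * h ∈ N then 1 else 0 := by
  have hsolve : ∀ k, g * k * h = 1 ↔ g⁻¹ * h⁻¹ = k := fun k ↦ by
    rw [mul_eq_one_iff_eq_inv, ← eq_inv_mul_iff_mul_eq, eq_comm]
  simp only [hsolve, sum_ite_eq, hfin.mem_toFinset, SetLike.mem_coe, hN.inv_mul_inv_mem_iff]

end Subgroup

section Witness

variable {G : Type*} [Group G] (N : Subgroup G) (hfin : (N : Set G).Finite)

noncomputable def normalPompeiuWitness : G → ℂ := fun x ↦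
  (if x ∈ N then (1 : ℂ) else 0) - (hfin.toFinset.card : ℂ) * (if x = 1 then 1 else 0)

theorem sum_normalPompeiuWitness_mul_mul [N.Normal] (g h : G) :
    ∑ k ∈ hfin.toFinset, normalPompeiuWitness N hfin (g * k * h) = 0 := by
  simp only [normalPompeiuWitness, sum_sub_distrib, ← mul_sum,
    Subgroup.Normal.sum_indicator_mul_mul ‹_›, Subgroup.Normal.sum_delta_mul_mul ‹_›]
  split_ifs <;> simp

theorem normalPompeiuWitness_ne_zero (hnt : N ≠ ⊥) : normalPompeiuWitness N hfin ≠ 0 := by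
  obtain ⟨x, hxN, hx1⟩ := N.bot_or_exists_ne_one.resolve_left hnt
  have hcard : 1 < #hfin.toFinset :=
    one_lt_card.mpr ⟨x, hfin.mem_toFinset.mpr hxN, 1, hfin.mem_toFinset.mpr N.one_mem, hx1⟩
  intro hzero
  have hone := congrFun hzero 1
  simp only [normalPompeiuWitness, N.one_mem, if_true, mul_one, Pi.zero_apply, sub_eq_zero] at hone
  exact hcard.ne (by exact_mod_cast hone)

theorem support_normalPompeiuWitness_finite :
    (Function.support (normalPompeiuWitness N hfin)).Finite := by
  refine hfin.subset fun x hx ↦ by_contra fun (hxN : x ∉ N) ↦ hx ?_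
  have hx1 : x ≠ 1 := fun h ↦ hxN (h ▸ N.one_mem)
  simp [normalPompeiuWitness, hxN, hx1]

end Witness

/-- Proposition 2.3: if `N` is a nontrivial finite normal subgroup of `G`, then the
finitely supported function `f = χ_N − |N|·δ_1` is nonzero and has vanishing two-sided
Pompeiu sums over `N`; consequently `N` is not a `C`-Pompeiu set for any class `C` of
functions containing the finitely supported functions (in particular not an
`F(G)`-Pompeiu set). -/
theorem finite_normal_not_pompeiu {G : Type*} [Group G] (N : Subgroup G) [N.Normal]
    (hfin : (N : Set G).Finite) (hnt : N ≠ ⊥) :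
    let f : G → ℂ := fun x =>
      (if x ∈ N then (1 : ℂ) else 0) - (hfin.toFinset.card : ℂ) * (if x = 1 then 1 else 0)
    f ≠ 0 ∧
    (∀ g h : G, ∑ k ∈ hfin.toFinset, f (g * k * h) = 0) ∧
    ∀ C : Set (G → ℂ), {u : G → ℂ | (Function.support u).Finite} ⊆ C →
      ¬ (∀ u ∈ C, (∀ g h : G, ∑ k ∈ hfin.toFinset, u (g * k * h) = 0) → u = 0) := by
  intro f
  have hne : f ≠ 0 := normalPompeiuWitness_ne_zero N hfin hnt
  have hsum : ∀ g h : G, ∑ k ∈ hfin.toFinset, f (g * k * h) = 0 :=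
    sum_normalPompeiuWitness_mul_mul N hfin
  refine ⟨hne, hsum, fun C hC hpompeiu ↦ hne (hpompeiu f ?_ hsum)⟩
  exact hC (support_normalPompeiuWitness_finite N hfin)
end

section
/- Let G be a group such that the only two-sided ideals of the complex group algebra ℂ[G] are {0}, the augmentation ideal ω(ℂG), and ℂ[G] itself. Then G is an F(G)-Pompeiu group, i.e., every nonempty finite subset of G is an F(G)-Pompeiu set. -/
/-!
Pair `ℂ[G]` with `f` through the linear functional `Φ (∑ a_g g) = ∑ a_g f(g)`. The elements `b`
with `Φ (c * b * d) = 0` for all `c, d` form the largest two-sided ideal inside `ker Φ`, and the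
Pompeiu condition says exactly that `a = ∑_{k ∈ K} k` lies in it. Since `a` has augmentation
`|K| ≠ 0`, this ideal is neither `0` nor `ω(ℂG)`, so it is all of `ℂ[G]`; hence `Φ` vanishes on
every group element, i.e. `f = 0`.
-/

namespace TwoSidedIdeal

variable {R : Type*}

def core [NonUnitalRing R] (S : AddSubgroup R) : TwoSidedIdeal R :=
  .mk' {b | ∀ c d, c * b * d ∈ S}
    (fun c d ↦ by simp)
    (fun hx hy c d ↦ by simpa [mul_add, add_mul] using S.add_mem (hx c d) (hy c d))
    (fun hx c d ↦ by simpa using S.neg_mem (hx c d))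
    (fun {x _} hy c d ↦ by simpa [mul_assoc] using hy (c * x) d)
    (fun {_ y} hx c d ↦ by simpa [mul_assoc] using hx c (y * d))

theorem mem_core [NonUnitalRing R] {S : AddSubgroup R} {b : R} :
    b ∈ core S ↔ ∀ c d, c * b * d ∈ S :=
  mem_mk' ..

theorem mem_of_mem_core [Ring R] {S : AddSubgroup R} {b : R} (hb : b ∈ core S) : b ∈ S := by
  simpa using mem_core.1 hb 1 1

end TwoSidedIdeal

namespace MonoidAlgebra

variable {k G : Type*} [Monoid G]

theorem mem_core_ker_of_single_mul_mul_single [CommRing k] {M : Type*} [AddCommGroup M]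
    [Module k M] (Φ : MonoidAlgebra k G →ₗ[k] M) {a : MonoidAlgebra k G}
    (ha : ∀ g h, Φ (single g 1 * a * single h 1) = 0) :
    a ∈ TwoSidedIdeal.core (LinearMap.ker Φ).toAddSubgroup := by
  refine TwoSidedIdeal.mem_core.2 fun c d ↦ ?_
  suffices Φ ∘ₗ LinearMap.mulRight k (a * d) = 0 by
    simpa [mul_assoc] using LinearMap.congr_fun this c
  refine (basis G k).ext fun g ↦ ?_
  suffices Φ ∘ₗ LinearMap.mulLeft k (single g 1 * a) = 0 by
    simpa [mul_assoc] using LinearMap.congr_fun this d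
  exact (basis G k).ext fun h ↦ by simpa [mul_assoc] using ha g h

theorem constr_single_mul_sum_mul_single [CommSemiring k] (f : G → k) (K : Finset G) (g h : G) :
    (basis G k).constr k f (single g 1 * (∑ x ∈ K, single x 1) * single h 1) =
      ∑ x ∈ K, f (g * x * h) := by
  simp only [Finset.mul_sum, Finset.sum_mul, single_mul_single, one_mul, map_sum]
  exact Finset.sum_congr rfl fun x _ ↦ (basis G k).constr_basis k f (g * x * h)

end MonoidAlgebra

open MonoidAlgebra

/-- If the only two-sided ideals of the complex group algebra `ℂ[G]` are `{0}`, the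
augmentation ideal (the kernel of the augmentation homomorphism sending `∑ a_g g` to
`∑ a_g`, i.e. the algebra map induced by the trivial monoid homomorphism `G →* ℂ`),
and `ℂ[G]` itself, then `G` is an `F(G)`-Pompeiu group: every nonempty finite subset
of `G` is an `F(G)`-Pompeiu set. -/
theorem pompeiu_group_of_ideals {G : Type*} [Group G]
    (hId : ∀ I : TwoSidedIdeal (MonoidAlgebra ℂ G),
      I = ⊥ ∨
      (I : Set (MonoidAlgebra ℂ G)) =
        {x : MonoidAlgebra ℂ G | MonoidAlgebra.lift ℂ ℂ G 1 x = 0} ∨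
      I = ⊤) :
    ∀ K : Finset G, K.Nonempty →
      ∀ f : G → ℂ, (∀ g h : G, ∑ k ∈ K, f (g * k * h) = 0) → f = 0 := by
  intro K hK f hf
  set Φ := (basis G ℂ).constr ℂ f
  set a : MonoidAlgebra ℂ G := ∑ x ∈ K, single x 1
  set J := TwoSidedIdeal.core (LinearMap.ker Φ).toAddSubgroup
  have haJ : a ∈ J := mem_core_ker_of_single_mul_mul_single Φ fun g h ↦ by
    rw [constr_single_mul_sum_mul_single, hf]
  have haug : lift ℂ ℂ G 1 a ≠ 0 := by
    simp [a, hK.ne_empty]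
  have hJ : J = ⊤ := by
    rcases hId J with hbot | haugIdeal | htop
    · rw [hbot, TwoSidedIdeal.mem_bot] at haJ
      simp [haJ] at haug
    · exact absurd ((Set.ext_iff.1 haugIdeal a).1 haJ) haug
    · exact htop
  ext x
  rw [Pi.zero_apply, ← (basis G ℂ).constr_basis ℂ f x]
  exact TwoSidedIdeal.mem_of_mem_core (hJ ▸ TwoSidedIdeal.mem_top _)
end
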